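/- Let m ≥ 2, 1 ≤ t < m, ρ ≥ 1, n ≥ ρ+1, and let A_x ⊆ Z_m^n be as in the model construction. Given x ∈ Z_m^n and 1 ≤ i ≤ ρ, among the i-th coordinates of elements of A_x ∪ {x}, every value of Z_m appears exactly t·m^{ρ−1} times; in A_x, every value appears t·m^{ρ−1} times except the i-th coordinate of x, which appears t·m^{ρ−1} − 1 times. -/

import Mathlib

/-!
`A_x ∪ {x}` is a product box in `(ℤ/m)^n`: the whole of `ℤ/m` in each of the first `ρ`
coordinates, `t` distinct values in coordinate `ρ + 1` (distinct because `t ≤ m`), and a single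
value in each later one. In a product box the number of points with a prescribed `i`-th coordinate
`v ∈ ℤ/m` is the product of the other side lengths, namely `t·m^(ρ−1)` here. Removing `x` only
lowers the count for `v = x i`.
-/

/-- The model construction in `(ℤ/m)^n`: first `ρ` coordinates free, coordinate `ρ+1`
(0-indexed: `ρ`) shifted by `0, ..., t-1`, remaining coordinates fixed, and `x` removed. -/
def modelA (m n ρ t : ℕ) [NeZero m] (hρ : ρ < n) (x : Fin n → ZMod m) :
    Finset (Fin n → ZMod m) :=
  ((Finset.univ : Finset (Fin n → ZMod m)).filter fun z =>
    (∀ j : Fin n, ρ < (j : ℕ) → z j = x j) ∧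
    ∃ i : Fin t, z ⟨ρ, hρ⟩ = x ⟨ρ, hρ⟩ + ((i : ℕ) : ZMod m)).erase x

open Finset
open Fintype (piFinset mem_piFinset card_piFinset)

theorem Fin.prod_univ_ite_lt_ite_eq {M : Type*} [CommMonoid M] {n ρ : ℕ} (hρ : ρ < n)
    (a b : M) :
    ∏ j : Fin n, (if (j : ℕ) < ρ then a else if (j : ℕ) = ρ then b else 1) = a ^ ρ * b := by
  obtain ⟨d, rfl⟩ : ∃ d, n = ρ + 1 + d := ⟨n - (ρ + 1), by omega⟩
  rw [Fin.prod_univ_eq_prod_range (fun k => if k < ρ then a else if k = ρ then b else 1),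
    prod_range_add, prod_range_succ, prod_ite_of_true fun k hk => mem_range.mp hk,
    Finset.prod_const, card_range, if_neg (lt_irrefl ρ), if_pos rfl,
    prod_eq_one fun k _ => by rw [if_neg (by omega), if_neg (by omega)], mul_one]

theorem ZMod.injective_natCast_fin_of_le {m t : ℕ} (htm : t ≤ m) :
    Function.Injective fun k : Fin t => ((k : ℕ) : ZMod m) := by
  intro k l h
  have := congrArg ZMod.val h
  rw [ZMod.val_natCast_of_lt (k.2.trans_le htm), ZMod.val_natCast_of_lt (l.2.trans_le htm)] at this
  exact Fin.ext this

theorem Fintype.card_mul_card_filter_piFinset_eq {ι : Type*} [Fintype ι] [DecidableEq ι]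
    {α : ι → Type*} [∀ j, DecidableEq (α j)] (s : ∀ j, Finset (α j)) (i : ι) {a : α i}
    (ha : a ∈ s i) : #(s i) * #{f ∈ piFinset s | f i = a} = #(piFinset s) := by
  rw [card_filter_piFinset_eq_of_mem s i ha, mul_prod_erase univ (fun j => #(s j)) (mem_univ i),
    card_piFinset]

section Model

variable {m n : ℕ} [NeZero m] (ρ t : ℕ) (x : Fin n → ZMod m)

def modelBox (j : Fin n) : Finset (ZMod m) :=
  if (j : ℕ) < ρ then univ
  else if (j : ℕ) = ρ then univ.image fun k : Fin t => x j + ((k : ℕ) : ZMod m)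
  else {x j}

theorem modelA_eq_erase (hρ : ρ < n) :
    modelA m n ρ t hρ x = (piFinset (modelBox ρ t x)).erase x := by
  unfold modelA
  congr 1
  ext z
  simp only [mem_filter, mem_univ, true_and, mem_piFinset, modelBox]
  constructor
  · rintro ⟨hfix, k, hk⟩ j
    split_ifs with hlt heq
    · exact mem_univ _
    · obtain rfl : j = ⟨ρ, hρ⟩ := Fin.ext heq
      exact mem_image.mpr ⟨k, mem_univ _, hk.symm⟩
    · exact mem_singleton.mpr (hfix j (by omega))
  · intro h
    refine ⟨fun j hj => ?_, ?_⟩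
    · simpa [hj.not_gt, hj.ne'] using h j
    · obtain ⟨k, hk⟩ : ∃ k : Fin t, x ⟨ρ, hρ⟩ + ((k : ℕ) : ZMod m) = z ⟨ρ, hρ⟩ := by
        simpa using h ⟨ρ, hρ⟩
      exact ⟨k, hk.symm⟩

theorem self_mem_piFinset_modelBox (ht : 0 < t) : x ∈ piFinset (modelBox ρ t x) := by
  refine mem_piFinset.mpr fun j => ?_
  unfold modelBox
  split_ifs
  · exact mem_univ _
  · exact mem_image.mpr ⟨⟨0, ht⟩, mem_univ _, by simp⟩
  · exact mem_singleton_self _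

theorem card_modelBox (htm : t ≤ m) (j : Fin n) :
    #(modelBox ρ t x j) = if (j : ℕ) < ρ then m else if (j : ℕ) = ρ then t else 1 := by
  unfold modelBox
  split_ifs
  · simp
  · exact (card_image_of_injective _ ((add_right_injective (x j)).comp
      (ZMod.injective_natCast_fin_of_le htm))).trans (Finset.card_fin t)
  · rfl

theorem card_piFinset_modelBox (htm : t ≤ m) (hρ : ρ < n) :
    #(piFinset (modelBox ρ t x)) = m ^ ρ * t := by
  simp only [card_piFinset, card_modelBox ρ t x htm, Fin.prod_univ_ite_lt_ite_eq hρ]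

end Model

theorem stmt_18_general (m n ρ t : ℕ) [NeZero m] (ht : 1 ≤ t) (htm : t < m)
    (hρ : ρ < n) (x : Fin n → ZMod m) (i : Fin n) (hi : (i : ℕ) < ρ) :
    ∀ v : ZMod m,
      (((modelA m n ρ t hρ x ∪ {x}).filter fun z => z i = v).card = t * m ^ (ρ - 1)) ∧
      (((modelA m n ρ t hρ x).filter fun z => z i = v).card =
        if v = x i then t * m ^ (ρ - 1) - 1 else t * m ^ (ρ - 1)) := by
  set B := piFinset (modelBox ρ t x)
  have hxB : x ∈ B := self_mem_piFinset_modelBox ρ t x ht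
  have hBi : modelBox ρ t x i = univ := if_pos hi
  have hfiber (v : ZMod m) : #{z ∈ B | z i = v} = t * m ^ (ρ - 1) := by
    have key := Fintype.card_mul_card_filter_piFinset_eq (modelBox ρ t x) i (hBi ▸ mem_univ v)
    rw [hBi, card_univ, ZMod.card, card_piFinset_modelBox ρ t x htm.le hρ] at key
    obtain ⟨r, rfl⟩ := Nat.exists_eq_add_of_lt hi
    refine Nat.eq_of_mul_eq_mul_left (NeZero.pos m) (key.trans ?_)
    simp only [Nat.add_sub_cancel, pow_succ]
    ring
  have hunion : modelA m n ρ t hρ x ∪ {x} = B := by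
    rw [modelA_eq_erase, union_singleton, insert_erase hxB]
  intro v
  refine ⟨hunion ▸ hfiber v, ?_⟩
  rw [modelA_eq_erase, filter_erase]
  split_ifs with hv
  · rw [card_erase_of_mem (mem_filter.mpr ⟨hxB, hv.symm⟩), hfiber]
  · rw [erase_eq_of_notMem fun h => hv (mem_filter.mp h).2.symm, hfiber]

/-- for `1 ≤ i ≤ ρ` (0-indexed: `(i : ℕ) < ρ`), among the `i`-th coordinates
of elements of `A_x ∪ {x}` every value of `ℤ/m` appears exactly `t·m^(ρ−1)` times; in `A_x`
every value appears `t·m^(ρ−1)` times except `x i`, which appears `t·m^(ρ−1) − 1` times. -/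
theorem stmt_18 (m n ρ t : ℕ) [NeZero m] (hm : 2 ≤ m) (ht : 1 ≤ t) (htm : t < m)
    (hρ1 : 1 ≤ ρ) (hρ : ρ < n) (x : Fin n → ZMod m) (i : Fin n) (hi : (i : ℕ) < ρ) :
    ∀ v : ZMod m,
      (((modelA m n ρ t hρ x ∪ {x}).filter fun z => z i = v).card = t * m ^ (ρ - 1)) ∧
      (((modelA m n ρ t hρ x).filter fun z => z i = v).card =
        if v = x i then t * m ^ (ρ - 1) - 1 else t * m ^ (ρ - 1)) :=
  stmt_18_general m n ρ t ht htm hρ x i hi
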